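/- For every Gauss code D with n ≥ 1 chords there exists a set S of chords of D with |S| ≤ (n − 1)/2 such that the Gauss code obtained from D by the crossing change at S is descending; consequently u(D) ≤ (n − 1)/2. -/

import Mathlib

/-!
Gauss codes for welded knots.

A Gauss code is a cyclic word in which each chord label occurs exactly twice,
once as a tail (`isHead = false`) and once as a head (`isHead = true`), both
occurrences carrying the common sign of the chord.  We represent the cyclic
word by a linear list of entries, working up to rotation (`List.rotate`) and
injective relabelling of the chords.
-/

/-- An endpoint of a chord: `(chord label, isHead, sign)`, where `isHead = false`
means a tail (over-passing) endpoint and `isHead = true` a head (under-passing)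
endpoint, and the sign `true`/`false` stands for `+1`/`-1`. -/
abbrev GEntry : Type := ℕ × Bool × Bool

/-- A (linear representative of a cyclic) word of endpoints. -/
abbrev GWord : Type := List GEntry

/-- The set of chord labels occurring in a word. -/
def chordSet (w : GWord) : Set ℕ := {a | ∃ e ∈ w, e.1 = a}

/-- `w` is a Gauss code: every chord label that occurs in `w` occurs exactly
twice, once as a tail and once as a head, with a common sign. -/
def IsGaussCode (w : GWord) : Prop :=
  ∀ a ∈ chordSet w,
    w.countP (fun e => e.1 == a) = 2 ∧
    ∃ s : Bool, (a, false, s) ∈ w ∧ (a, true, s) ∈ w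

/-- The crossing change at the set `S` of chords: at every chord of `S`, the
tail and head markings of its two occurrences are exchanged and its sign is
reversed. -/
def crossingChange (S : Finset ℕ) (w : GWord) : GWord :=
  w.map fun e => if e.1 ∈ S then (e.1, !e.2.1, !e.2.2) else e

/-- Deletion of the chord `a` (both of its endpoints) from the word. -/
def deleteChord (a : ℕ) (w : GWord) : GWord :=
  w.filter fun e => e.1 != a

/-- Equality of words up to cyclic permutation. -/
def RotEq (w w' : GWord) : Prop := ∃ n : ℕ, w' = w.rotate n

/-- Renaming the chords of a word by `f`. -/
def relabelWord (f : ℕ → ℕ) (w : GWord) : GWord := w.map fun e => (f e.1, e.2)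

/-- Equality of words up to cyclic permutation and (injective) renaming of
the chords. -/
def CyclicRename (w w' : GWord) : Prop :=
  ∃ (n : ℕ) (f : ℕ → ℕ), Function.Injective f ∧ w' = relabelWord f (w.rotate n)

/-- Raw C1 move (deleting direction): deletion of a chord whose two endpoints
occupy adjacent positions; the inserting direction is the converse relation. -/
def C1delRaw (u v : GWord) : Prop :=
  ∃ (x y : GWord) (a : ℕ) (h s : Bool),
    (∀ e ∈ x ++ y, e.1 ≠ a) ∧
    u = x ++ (a, h, s) :: (a, !h, s) :: y ∧
    v = x ++ y

/-- Raw W move: interchange of two adjacent endpoints that are both tails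
(of any two chords, regardless of signs). -/
def WRaw (u v : GWord) : Prop :=
  ∃ (x y : GWord) (a b : ℕ) (s t : Bool),
    u = x ++ (a, false, s) :: (b, false, t) :: y ∧
    v = x ++ (b, false, t) :: (a, false, s) :: y

/-- Raw C2 move (deleting direction): deletion of a pair of chords of opposite
signs whose two tails occupy adjacent positions and whose two heads occupy
adjacent positions. -/
def C2delRaw (u v : GWord) : Prop :=
  ∃ (x y z : GWord) (a b : ℕ) (s : Bool),
    a ≠ b ∧
    (∀ e ∈ x ++ y ++ z, e.1 ≠ a ∧ e.1 ≠ b) ∧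
    (u = x ++ (a, false, s) :: (b, false, !s) :: (y ++ (a, true, s) :: (b, true, !s) :: z) ∨
     u = x ++ (a, false, s) :: (b, false, !s) :: (y ++ (b, true, !s) :: (a, true, s) :: z)) ∧
    v = x ++ y ++ z

/-- Raw C3 move: the Gauss-code translation of the planar Reidemeister move of
type 3.  Three strands `A`, `B`, `C` (modelled on the lines `y = -1`, `y = x`,
`y = -x` and their directions `(1,0)`, `(1,1)`, `(-1,1)`, possibly reversed
according to `dA`, `dB`, `dC`) meet pairwise in the chords `a = AB`, `b = AC`,
`c = BC`; `oAB`, `oAC`, `oBC` record which strand passes over in each pair and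
must come from a linear height order.  The six endpoints form three adjacent
pairs, one on each strand, and the move exchanges the order within each pair;
the head/tail pattern is determined by the heights and the signs by the heights
and the directions, as in a planar diagram. -/
def C3Raw (u v : GWord) : Prop :=
  ∃ (x y z t : GWord) (a b c : ℕ) (oAB oAC oBC dA dB dC swap : Bool),
    a ≠ b ∧ a ≠ c ∧ b ≠ c ∧
    (oAB = oBC → oAC = oAB) ∧
    (let sa : Bool := (dA == dB) == oAB
     let sb : Bool := (dA == dC) == oAC
     let sc : Bool := (dB == dC) == oBC
     let PA : GWord :=
       if dA then [(a, !oAB, sa), (b, !oAC, sb)] else [(b, !oAC, sb), (a, !oAB, sa)]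
     let PB : GWord :=
       if dB then [(a, oAB, sa), (c, !oBC, sc)] else [(c, !oBC, sc), (a, oAB, sa)]
     let PC : GWord :=
       if dC then [(b, oAC, sb), (c, oBC, sc)] else [(c, oBC, sc), (b, oAC, sb)]
     let Q1 : GWord := if swap then PC else PB
     let Q2 : GWord := if swap then PB else PC
     u = x ++ PA ++ y ++ Q1 ++ z ++ Q2 ++ t ∧
     v = x ++ PA.reverse ++ y ++ Q1.reverse ++ z ++ Q2.reverse ++ t)

/-- One welded Reidemeister move (C1, C2, C3 or W, in either direction),
performed up to cyclic permutation and renaming of chords. -/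
def WeldedStep (u v : GWord) : Prop :=
  ∃ u₀ v₀ : GWord, CyclicRename u u₀ ∧ CyclicRename v₀ v ∧
    (C1delRaw u₀ v₀ ∨ C1delRaw v₀ u₀ ∨ C2delRaw u₀ v₀ ∨ C2delRaw v₀ u₀ ∨
     C3Raw u₀ v₀ ∨ C3Raw v₀ u₀ ∨ WRaw u₀ v₀)

/-- Welded equivalence: two Gauss codes are welded-equivalent if they are
related by a finite sequence of C1, C2, C3 and W moves (on cyclic words). -/
def WeldedEquiv : GWord → GWord → Prop := Relation.EqvGen WeldedStep

/-- A Gauss code represents the trivial welded knot iff it is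
welded-equivalent to the empty code. -/
def RepresentsTrivial (w : GWord) : Prop := WeldedEquiv w []

/-- One C1 or W move (in either direction), up to cyclic permutation and
renaming of chords. -/
def CWStep (u v : GWord) : Prop :=
  ∃ u₀ v₀ : GWord, CyclicRename u u₀ ∧ CyclicRename v₀ v ∧
    (C1delRaw u₀ v₀ ∨ C1delRaw v₀ u₀ ∨ WRaw u₀ v₀)

/-- Relatedness by a finite sequence of C1 and W moves alone. -/
def CWEquiv : GWord → GWord → Prop := Relation.EqvGen CWStep

/-- One W move, up to cyclic permutation. -/
def WStepRot (u v : GWord) : Prop :=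
  ∃ u₀ v₀ : GWord, RotEq u u₀ ∧ RotEq v₀ v ∧ WRaw u₀ v₀

/-- One deleting C1 move, up to cyclic permutation. -/
def C1StepRot (u v : GWord) : Prop :=
  ∃ u₀ v₀ : GWord, RotEq u u₀ ∧ RotEq v₀ v ∧ C1delRaw u₀ v₀

/-- In the linear word `v`, no chord has its head occurring strictly before
its tail. -/
def TailsFirst (v : GWord) : Prop :=
  ¬ ∃ (x y z : GWord) (a : ℕ) (s s' : Bool),
      v = x ++ (a, true, s) :: (y ++ (a, false, s') :: z)

/-- A Gauss code is descending if the cyclic word can be cut at some point and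
read in one of the two directions so that every chord's tail occurs before its
head. -/
def IsDescending (w : GWord) : Prop :=
  ∃ n : ℕ, TailsFirst (w.rotate n) ∨ TailsFirst ((w.rotate n).reverse)

/-- `c(D)`: the minimal number of chords of a Gauss code representing the same
welded knot as `D`. -/
noncomputable def minCrossing (D : GWord) : ℕ :=
  sInf {n : ℕ | ∃ D' : GWord, IsGaussCode D' ∧ WeldedEquiv D D' ∧ (chordSet D').ncard = n}

/-- `u(D)`: the minimal cardinality of a set `S` of chords of `D` such that the
crossing change at `S` turns `D` into a Gauss code representing the trivial
welded knot. -/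
noncomputable def unknottingNumWord (D : GWord) : ℕ :=
  sInf {k : ℕ | ∃ S : Finset ℕ, ↑S ⊆ chordSet D ∧ S.card = k ∧
    WeldedEquiv (crossingChange S D) []}

/-- `u(K)`: the minimum of `u(D')` over all Gauss codes `D'` representing the
same welded knot as `D`. -/
noncomputable def unknottingNum (D : GWord) : ℕ :=
  sInf {k : ℕ | ∃ D' : GWord, IsGaussCode D' ∧ WeldedEquiv D D' ∧ unknottingNumWord D' = k}

/-!
Rotate `D` so that it starts with the tail of some chord `a`, and read it both forwards and,
keeping that tail in front, backwards. Every chord other than `a` is met head first in exactly one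
of the two readings and `a` in neither, so in one of them at most `(n - 1)/2` chords are met head
first; changing exactly those crossings makes that reading tails-first, i.e. the code descending.
A descending code is trivial: the first head met is preceded by its own tail with only tails in
between, so W moves bring the two endpoints together and a C1 move deletes the chord.
-/

theorem List.pair_sublist_iff {α : Type*} {p q : α} {l : List α} :
    [p, q].Sublist l ↔ ∃ x y z, l = x ++ p :: (y ++ q :: z) := by
  constructor
  · intro h
    obtain ⟨r₁, r₂, rfl, hp, hq⟩ := List.cons_sublist_iff.mp h
    obtain ⟨x, u, rfl⟩ := List.append_of_mem hp
    obtain ⟨v, z, rfl⟩ := List.append_of_mem (List.singleton_sublist.mp hq)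
    exact ⟨x, u ++ v, z, by simp⟩
  · rintro ⟨x, y, z, rfl⟩
    exact ((List.singleton_sublist.mpr (by simp)).cons_cons p).trans (List.sublist_append_right x _)

theorem chordSet_perm {w w' : GWord} (h : w.Perm w') : chordSet w = chordSet w' := by
  ext a
  simp [chordSet, h.mem_iff]

theorem IsGaussCode.perm {w w' : GWord} (hw : IsGaussCode w) (h : w.Perm w') :
    IsGaussCode w' := by
  intro a ha
  obtain ⟨hc, s, ht, hh⟩ := hw a (chordSet_perm h ▸ ha)
  exact ⟨h.countP_eq _ ▸ hc, s, h.mem_iff.mp ht, h.mem_iff.mp hh⟩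

def chordFinset (w : GWord) : Finset ℕ := (w.map Prod.fst).toFinset

theorem coe_chordFinset (w : GWord) : (chordFinset w : Set ℕ) = chordSet w := by
  ext a
  simp [chordFinset, chordSet]

@[simp]
theorem crossingChange_entry_fst (S : Finset ℕ) (e : GEntry) :
    (if e.1 ∈ S then (e.1, !e.2.1, !e.2.2) else e).1 = e.1 := by
  split_ifs <;> rfl

theorem map_fst_crossingChange (S : Finset ℕ) (w : GWord) :
    (crossingChange S w).map Prod.fst = w.map Prod.fst := by
  simp [crossingChange, Function.comp_def]

theorem chordSet_crossingChange (S : Finset ℕ) (w : GWord) :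
    chordSet (crossingChange S w) = chordSet w := by
  ext a
  change (∃ e ∈ _, Prod.fst e = a) ↔ ∃ e ∈ w, Prod.fst e = a
  rw [← List.mem_map, ← List.mem_map, map_fst_crossingChange]

theorem crossingChange_rotate (S : Finset ℕ) (w : GWord) (n : ℕ) :
    crossingChange S (w.rotate n) = (crossingChange S w).rotate n :=
  List.map_rotate _ _ _

theorem crossingChange_reverse (S : Finset ℕ) (w : GWord) :
    crossingChange S w.reverse = (crossingChange S w).reverse :=
  List.map_reverse

theorem isGaussCode_crossingChange {w : GWord} (hw : IsGaussCode w) (S : Finset ℕ) :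
    IsGaussCode (crossingChange S w) := by
  intro a ha
  rw [chordSet_crossingChange] at ha
  obtain ⟨hc, s, ht, hh⟩ := hw a ha
  refine ⟨?_, ?_⟩
  · rw [crossingChange, List.countP_map, ← hc]
    exact List.countP_congr fun e _ => by simp
  · by_cases haS : a ∈ S
    · exact ⟨!s, List.mem_map.mpr ⟨_, hh, by simp [haS]⟩,
        List.mem_map.mpr ⟨_, ht, by simp [haS]⟩⟩
    · exact ⟨s, List.mem_map.mpr ⟨_, ht, by simp [haS]⟩,
        List.mem_map.mpr ⟨_, hh, by simp [haS]⟩⟩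

theorem isGaussCode_deleteChord {w : GWord} (hw : IsGaussCode w) (a : ℕ) :
    IsGaussCode (deleteChord a w) := by
  rintro b ⟨e, he, rfl⟩
  obtain ⟨he, hea⟩ := List.mem_filter.mp he
  have hea : e.1 ≠ a := by simpa using hea
  obtain ⟨hc, s, ht, hh⟩ := hw e.1 ⟨e, he, rfl⟩
  refine ⟨?_, s, List.mem_filter.mpr ⟨ht, by simpa using hea⟩,
    List.mem_filter.mpr ⟨hh, by simpa using hea⟩⟩
  rw [deleteChord, List.countP_filter, ← hc]
  refine List.countP_congr fun f _ => ?_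
  simp only [Bool.and_eq_true, beq_iff_eq, bne_iff_ne, ne_eq, and_iff_left_iff_imp]
  exact fun hf => hf ▸ hea

theorem IsGaussCode.filter_label {w : GWord} (hw : IsGaussCode w) {a : ℕ}
    (ha : a ∈ chordSet w) :
    ∃ s, w.filter (·.1 == a) = [(a, false, s), (a, true, s)] ∨
      w.filter (·.1 == a) = [(a, true, s), (a, false, s)] := by
  obtain ⟨hc, s, ht, hh⟩ := hw a ha
  obtain ⟨x, y, hxy⟩ := List.length_eq_two.mp (List.countP_eq_length_filter ▸ hc)
  have ht' : (a, false, s) ∈ w.filter (·.1 == a) := List.mem_filter.mpr ⟨ht, by simp⟩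
  have hh' : (a, true, s) ∈ w.filter (·.1 == a) := List.mem_filter.mpr ⟨hh, by simp⟩
  rw [hxy] at ht' hh' ⊢
  simp only [List.mem_cons, List.not_mem_nil, or_false] at ht' hh'
  refine ⟨s, ?_⟩
  rcases ht' with rfl | rfl <;> rcases hh' with h | h <;> simp_all

theorem IsGaussCode.sign_eq {w : GWord} (hw : IsGaussCode w) {a : ℕ} {b b' s s' : Bool}
    (h : (a, b, s) ∈ w) (h' : (a, b', s') ∈ w) : s = s' := by
  obtain ⟨σ, hσ | hσ⟩ := hw.filter_label ⟨_, h, rfl⟩ <;>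
  · have h₁ : (a, b, s) ∈ w.filter (·.1 == a) := List.mem_filter.mpr ⟨h, by simp⟩
    have h₂ : (a, b', s') ∈ w.filter (·.1 == a) := List.mem_filter.mpr ⟨h', by simp⟩
    rw [hσ] at h₁ h₂
    simp only [List.mem_cons, Prod.mk.injEq, List.not_mem_nil, or_false] at h₁ h₂
    grind

theorem IsGaussCode.filter_eq_of_sublist {w : GWord} (hw : IsGaussCode w) {a : ℕ} {p q : GEntry}
    (hpq : [p, q].Sublist w) (hp : p.1 = a) (hq : q.1 = a) :
    w.filter (·.1 == a) = [p, q] := by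
  have hsub : [p, q].Sublist (w.filter (·.1 == a)) := by
    simpa [hp, hq] using hpq.filter (·.1 == a)
  have ha : a ∈ chordSet w := ⟨p, hpq.subset (by simp), hp⟩
  refine (hsub.eq_of_length ?_).symm
  rw [← List.countP_eq_length_filter, (hw a ha).1]
  rfl

theorem IsGaussCode.label_ne_of_eq_append {w x y z : GWord} {a : ℕ} {p q : GEntry}
    (hw : IsGaussCode w) (h : w = x ++ p :: (y ++ q :: z)) (hp : p.1 = a) (hq : q.1 = a) :
    ∀ e ∈ x ++ y ++ z, e.1 ≠ a := by
  have hc := (hw a ⟨p, by simp [h], hp⟩).1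
  simp only [h, List.countP_append, List.countP_cons, hp, hq, beq_self_eq_true,
    if_true] at hc
  have hx : x.countP (·.1 == a) = 0 := by omega
  have hy : y.countP (·.1 == a) = 0 := by omega
  have hz : z.countP (·.1 == a) = 0 := by omega
  simp only [List.countP_eq_zero, beq_iff_eq] at hx hy hz
  simp only [List.mem_append]
  rintro e ((he | he) | he)
  exacts [hx e he, hy e he, hz e he]

def HeadFirst (w : GWord) (a : ℕ) : Prop :=
  ∃ s s' : Bool, [(a, true, s), (a, false, s')].Sublist w

theorem tailsFirst_iff {v : GWord} : TailsFirst v ↔ ∀ a, ¬ HeadFirst v a := by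
  simp only [TailsFirst, HeadFirst, List.pair_sublist_iff]
  aesop

theorem TailsFirst.sublist {u v : GWord} (h : u.Sublist v) (hv : TailsFirst v) : TailsFirst u := by
  rw [tailsFirst_iff] at hv ⊢
  rintro a ⟨s, s', hs⟩
  exact hv a ⟨s, s', hs.trans h⟩

theorem headFirst_iff_filter {w : GWord} {a : ℕ} :
    HeadFirst w a ↔ HeadFirst (w.filter (·.1 == a)) a := by
  refine exists₂_congr fun s s' => ⟨fun h => ?_, fun h => h.trans List.filter_sublist⟩
  simpa using h.filter (·.1 == a)

theorem headFirst_congr_of_filter_eq {w v : GWord} {a : ℕ}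
    (h : w.filter (·.1 == a) = v.filter (·.1 == a)) : HeadFirst w a ↔ HeadFirst v a := by
  rw [headFirst_iff_filter, h, ← headFirst_iff_filter]

theorem IsGaussCode.headFirst_reverse_iff {w : GWord} (hw : IsGaussCode w) {a : ℕ}
    (ha : a ∈ chordSet w) : HeadFirst w.reverse a ↔ ¬ HeadFirst w a := by
  simp only [HeadFirst, ← List.reverse_sublist (l₂ := w.reverse), List.reverse_reverse,
    List.reverse_cons, List.reverse_nil, List.nil_append, List.cons_append]
  constructor
  · rintro ⟨s, s', h⟩ ⟨t, t', h'⟩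
    have := (hw.filter_eq_of_sublist h rfl rfl).symm.trans (hw.filter_eq_of_sublist h' rfl rfl)
    simp at this
  · intro hnot
    obtain ⟨s, hs | hs⟩ := hw.filter_label ha
    · exact ⟨s, s, hs ▸ List.filter_sublist⟩
    · exact (hnot ⟨s, s, hs ▸ List.filter_sublist⟩).elim

theorem IsGaussCode.not_headFirst_cons {t : GWord} {a : ℕ} {s : Bool}
    (hw : IsGaussCode ((a, false, s) :: t)) : ¬ HeadFirst ((a, false, s) :: t) a := by
  rintro ⟨σ, σ', h⟩
  simpa using hw.filter_eq_of_sublist h rfl rfl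

theorem IsGaussCode.tailsFirst_crossingChange {w : GWord} {S : Finset ℕ} (hw : IsGaussCode w)
    (hS : ∀ a ∈ chordSet w, a ∈ S ↔ HeadFirst w a) : TailsFirst (crossingChange S w) := by
  rw [tailsFirst_iff]
  rintro a ⟨s, s', h⟩
  obtain ⟨l, hl, hmap⟩ := List.sublist_map_iff.mp h
  replace hmap : [(a, true, s), (a, false, s')] = crossingChange S l := hmap
  obtain ⟨⟨b, fb, sb⟩, ⟨c, fc, sc⟩, rfl⟩ : ∃ e₁ e₂, l = [e₁, e₂] :=
    List.length_eq_two.mp (by simpa [crossingChange] using congrArg List.length hmap.symm)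
  have hlabels := congrArg (List.map Prod.fst) hmap
  rw [map_fst_crossingChange] at hlabels
  obtain ⟨rfl, rfl⟩ : a = b ∧ a = c := by simpa using hlabels
  have ha : a ∈ chordSet w := ⟨_, hl.subset List.mem_cons_self, rfl⟩
  by_cases haS : a ∈ S
  · -- the changed crossing `a` was tail-first in `w`
    have hrev : HeadFirst w.reverse a := by
      cases fb <;> cases fc <;> simp [crossingChange, haS] at hmap
      exact ⟨sc, sb, by simpa using List.reverse_sublist.mpr hl⟩
    exact (hw.headFirst_reverse_iff ha).mp hrev ((hS a ha).mp haS)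
  · cases fb <;> cases fc <;> simp [crossingChange, haS] at hmap
    exact haS ((hS a ha).mpr ⟨sb, sc, hl⟩)

theorem cyclicRename_rotate (w : GWord) (n : ℕ) : CyclicRename w (w.rotate n) :=
  ⟨n, id, Function.injective_id, by simp [relabelWord]⟩

theorem cyclicRename_refl (w : GWord) : CyclicRename w w := by
  simpa using cyclicRename_rotate w 0

theorem WeldedEquiv.of_c1Del {u v : GWord} (h : C1delRaw u v) : WeldedEquiv u v :=
  .rel _ _ ⟨u, v, cyclicRename_refl u, cyclicRename_refl v, Or.inl h⟩

theorem WeldedEquiv.of_wRaw {u v : GWord} (h : WRaw u v) : WeldedEquiv u v :=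
  .rel _ _ ⟨u, v, cyclicRename_refl u, cyclicRename_refl v, by tauto⟩

-- Rotation alone is not a move: insert a fresh kink into the rotated word, then delete it.
theorem weldedEquiv_rotate (w : GWord) (n : ℕ) : WeldedEquiv w (w.rotate n) := by
  obtain ⟨a, ha⟩ := Infinite.exists_notMem_finset (w.map Prod.fst).toFinset
  have hfresh : ∀ e ∈ w.rotate n, e.1 ≠ a := by
    rintro e he rfl
    exact ha (List.mem_toFinset.mpr (List.mem_map_of_mem (List.mem_rotate.mp he)))
  have hkink : C1delRaw ((a, false, true) :: (a, true, true) :: w.rotate n) (w.rotate n) :=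
    ⟨[], w.rotate n, a, false, true, by simpa using hfresh, rfl, rfl⟩
  refine .trans _ _ _
    (.rel _ _ ⟨w.rotate n, _, cyclicRename_rotate w n, ?_, Or.inr (Or.inl hkink)⟩)
    (WeldedEquiv.of_c1Del hkink)
  exact cyclicRename_refl _

theorem weldedEquiv_tail_append_tails {y : GWord} (hy : ∀ e ∈ y, e.2.1 = false)
    (x z : GWord) (b : ℕ) (s : Bool) :
    WeldedEquiv (x ++ (b, false, s) :: (y ++ z)) (x ++ y ++ (b, false, s) :: z) := by
  induction y generalizing x with
  | nil => simpa using .refl _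
  | cons e y ih =>
    obtain ⟨c, h, t⟩ := e
    obtain rfl : h = false := hy _ List.mem_cons_self
    have hswap : WRaw (x ++ (b, false, s) :: ((c, false, t) :: y ++ z))
        ((x ++ [(c, false, t)]) ++ (b, false, s) :: (y ++ z)) :=
      ⟨x, y ++ z, b, c, s, t, rfl, by simp⟩
    have := (WeldedEquiv.of_wRaw hswap).trans _ _ _
      (ih (fun f hf => hy f (List.mem_cons_of_mem _ hf)) (x ++ [(c, false, t)]))
    simp only [List.append_assoc, List.cons_append] at this ⊢
    exact this

theorem weldedEquiv_tail_tails_head {x y z : GWord} {a : ℕ} {s : Bool}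
    (hy : ∀ e ∈ y, e.2.1 = false) (ha : ∀ e ∈ x ++ y ++ z, e.1 ≠ a) :
    WeldedEquiv (x ++ (a, false, s) :: (y ++ (a, true, s) :: z)) (x ++ y ++ z) :=
  (weldedEquiv_tail_append_tails hy x _ a s).trans _ _ _
    (WeldedEquiv.of_c1Del ⟨x ++ y, z, a, false, s, by simpa using ha, by simp, rfl⟩)

theorem weldedEquiv_head_tails_tail {x y z : GWord} {a : ℕ} {s : Bool}
    (hy : ∀ e ∈ y, e.2.1 = false) (ha : ∀ e ∈ x ++ y ++ z, e.1 ≠ a) :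
    WeldedEquiv (x ++ (a, true, s) :: (y ++ (a, false, s) :: z)) (x ++ y ++ z) := by
  have hmove := weldedEquiv_tail_append_tails hy (x ++ [(a, true, s)]) z a s
  simp only [List.append_assoc, List.cons_append, List.nil_append] at hmove
  exact hmove.symm.trans _ _ _
    (WeldedEquiv.of_c1Del ⟨x, y ++ z, a, true, s, by simpa using ha, rfl, by simp⟩)

theorem IsGaussCode.exists_tail_tails_head {w : GWord} (hw : IsGaussCode w) (ht : TailsFirst w)
    (hne : w ≠ []) :
    ∃ x y z a s,
      w = x ++ (a, false, s) :: (y ++ (a, true, s) :: z) ∧ ∀ e ∈ y, e.2.1 = false := by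
  obtain ⟨e, he⟩ := List.exists_mem_of_ne_nil w hne
  obtain ⟨-, _, -, hhead⟩ := hw e.1 ⟨e, he, rfl⟩
  obtain ⟨h, hfind⟩ := Option.isSome_iff_exists.mp
    (List.find?_isSome (p := (·.2.1)) |>.mpr ⟨_, hhead, rfl⟩)
  obtain ⟨hflag, as, bs, rfl, has⟩ := List.find?_eq_some_iff_append.mp hfind
  obtain ⟨a, b, σ⟩ := h
  obtain rfl : b = true := hflag
  obtain ⟨-, s, htail, hhead'⟩ := hw a ⟨(a, true, σ), by simp, rfl⟩
  obtain rfl : s = σ := hw.sign_eq hhead' (List.mem_append_right _ List.mem_cons_self)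
  rcases List.mem_append.mp htail with htail | htail
  · obtain ⟨x, y, rfl⟩ := List.append_of_mem htail
    refine ⟨x, y, bs, a, s, by simp, fun f hf => ?_⟩
    simpa using has f (by simp [hf])
  · obtain ⟨u, v, rfl⟩ := List.append_of_mem (List.mem_of_ne_of_mem (by simp) htail)
    exact (tailsFirst_iff.mp ht a ⟨s, s, List.pair_sublist_iff.mpr ⟨as, u, v, rfl⟩⟩).elim

theorem IsGaussCode.weldedEquiv_deleteChord {w x y z : GWord} {a : ℕ} {b s : Bool}
    (hw : IsGaussCode w) (h : w = x ++ (a, !b, s) :: (y ++ (a, b, s) :: z))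
    (hy : ∀ e ∈ y, e.2.1 = false) : WeldedEquiv w (deleteChord a w) := by
  have ha := hw.label_ne_of_eq_append h rfl rfl
  have hdel : deleteChord a w = x ++ y ++ z := by
    simp only [List.mem_append] at ha
    simp only [h, deleteChord, List.filter_append, List.filter_cons, bne_self_eq_false,
      Bool.false_eq_true, if_false]
    rw [List.filter_eq_self.mpr, List.filter_eq_self.mpr, List.filter_eq_self.mpr,
      List.append_assoc]
    all_goals intro e he; simpa using ha e (by tauto)
  rw [hdel, h]
  cases b
  · exact weldedEquiv_head_tails_tail hy ha
  · exact weldedEquiv_tail_tails_head hy ha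

theorem IsGaussCode.exists_weldedEquiv_deleteChord {w : GWord} (hw : IsGaussCode w)
    (hdesc : TailsFirst w ∨ TailsFirst w.reverse) (hne : w ≠ []) :
    ∃ a ∈ chordSet w, WeldedEquiv w (deleteChord a w) := by
  rcases hdesc with ht | ht
  · obtain ⟨x, y, z, a, s, h, hy⟩ := hw.exists_tail_tails_head ht hne
    exact ⟨a, ⟨(a, false, s), by simp [h], rfl⟩,
      hw.weldedEquiv_deleteChord (b := true) h hy⟩
  · obtain ⟨x, y, z, a, s, h, hy⟩ :=
      (hw.perm w.reverse_perm.symm).exists_tail_tails_head ht (by simpa using hne)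
    have h' : w = z.reverse ++ (a, !false, s) :: (y.reverse ++ (a, false, s) :: x.reverse) := by
      simpa using congrArg List.reverse h
    exact ⟨a, ⟨(a, false, s), by simp [h'], rfl⟩,
      hw.weldedEquiv_deleteChord h' fun e he => hy e (List.mem_reverse.mp he)⟩

theorem IsGaussCode.weldedEquiv_nil_of_tailsFirst {w : GWord} (hw : IsGaussCode w)
    (hdesc : TailsFirst w ∨ TailsFirst w.reverse) : WeldedEquiv w [] := by
  rcases eq_or_ne w [] with rfl | hne
  · exact .refl _
  obtain ⟨a, ⟨e, he, rfl⟩, hdel⟩ := hw.exists_weldedEquiv_deleteChord hdesc hne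
  have hsub : (deleteChord e.1 w).Sublist w := List.filter_sublist
  have : (deleteChord e.1 w).length < w.length :=
    List.length_filter_lt_length_iff_exists.mpr ⟨e, he, by simp⟩
  exact hdel.trans _ _ _ ((isGaussCode_deleteChord hw e.1).weldedEquiv_nil_of_tailsFirst
    (hdesc.imp (·.sublist hsub) (·.sublist hsub.reverse)))
termination_by w.length

theorem IsGaussCode.weldedEquiv_nil_of_isDescending {w : GWord} (hw : IsGaussCode w)
    (hd : IsDescending w) : WeldedEquiv w [] := by
  obtain ⟨n, hn⟩ := hd
  exact (weldedEquiv_rotate w n).trans _ _ _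
    ((hw.perm (w.rotate_perm n).symm).weldedEquiv_nil_of_tailsFirst hn)

theorem IsGaussCode.exists_rotate_eq_cons {D : GWord} (hD : IsGaussCode D) (hne : D ≠ []) :
    ∃ r a s t, D.rotate r = (a, false, s) :: t := by
  obtain ⟨e, he⟩ := List.exists_mem_of_ne_nil D hne
  obtain ⟨-, s, htail, -⟩ := hD e.1 ⟨e, he, rfl⟩
  obtain ⟨x, y, rfl⟩ := List.append_of_mem htail
  exact ⟨x.length, e.1, s, y ++ x, List.rotate_append_length_eq _ _⟩

theorem IsGaussCode.exists_tailsFirst_crossingChange_pair {t : GWord} {a : ℕ} {s : Bool}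
    (hw : IsGaussCode ((a, false, s) :: t)) :
    ∃ S S' : Finset ℕ, S.card + S'.card + 1 = (chordSet ((a, false, s) :: t)).ncard ∧
      ↑S ⊆ chordSet ((a, false, s) :: t) ∧ ↑S' ⊆ chordSet ((a, false, s) :: t) ∧
      TailsFirst (crossingChange S ((a, false, s) :: t)) ∧
      TailsFirst (crossingChange S' ((a, false, s) :: t.reverse)) := by
  classical
  set w : GWord := (a, false, s) :: t
  have hperm : w.Perm ((a, false, s) :: t.reverse) := (List.reverse_perm t).symm.cons _
  have hw' := hw.perm hperm
  have ha : a ∈ chordFinset w := by simp [chordFinset, w]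
  set L := (chordFinset w).erase a
  have hL : ↑L ⊆ chordSet w :=
    coe_chordFinset w ▸ Finset.coe_subset.mpr (Finset.erase_subset _ _)
  have hmemL : ∀ b ∈ chordSet w, b ∈ L ↔ b ≠ a := fun b hb => by
    rw [← coe_chordFinset, Finset.mem_coe] at hb
    simp [L, hb]
  refine ⟨L.filter (HeadFirst w), L.filter (¬ HeadFirst w ·), ?_,
    (Finset.coe_subset.mpr (Finset.filter_subset _ _)).trans hL,
    (Finset.coe_subset.mpr (Finset.filter_subset _ _)).trans hL,
    hw.tailsFirst_crossingChange fun b hb => ?_, hw'.tailsFirst_crossingChange fun b hb => ?_⟩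
  · rw [Finset.card_filter_add_card_filter_not, Finset.card_erase_of_mem ha, ← coe_chordFinset,
      Set.ncard_coe_finset]
    have := Finset.card_pos.mpr ⟨a, ha⟩
    omega
  · rw [Finset.mem_filter, hmemL b hb]
    exact ⟨fun h => h.2, fun h => ⟨by rintro rfl; exact hw.not_headFirst_cons h, h⟩⟩
  · rw [← chordSet_perm hperm] at hb
    rw [Finset.mem_filter, hmemL b hb]
    rcases eq_or_ne b a with rfl | hba
    · simpa using hw'.not_headFirst_cons
    · rw [← hw.headFirst_reverse_iff hb]
      refine ⟨fun h => (headFirst_congr_of_filter_eq ?_).mpr h.2,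
        fun h => ⟨hba, (headFirst_congr_of_filter_eq ?_).mp h⟩⟩ <;> simp [w, Ne.symm hba]

theorem IsGaussCode.exists_crossingChange_isDescending {D : GWord} (hD : IsGaussCode D)
    (hne : D ≠ []) :
    ∃ S : Finset ℕ, ↑S ⊆ chordSet D ∧ 2 * S.card + 1 ≤ (chordSet D).ncard ∧
      IsDescending (crossingChange S D) := by
  obtain ⟨r, a, s, t, hr⟩ := hD.exists_rotate_eq_cons hne
  have hchords : chordSet ((a, false, s) :: t) = chordSet D :=
    hr ▸ chordSet_perm (D.rotate_perm r)
  obtain ⟨S, S', hcard, hS, hS', htf, htf'⟩ :=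
    (hr ▸ hD.perm (D.rotate_perm r).symm : IsGaussCode _).exists_tailsFirst_crossingChange_pair
  rw [hchords] at hcard hS hS'
  rcases le_total S.card S'.card with hle | hle
  · refine ⟨S, hS, by omega, r, Or.inl ?_⟩
    rwa [← crossingChange_rotate, hr]
  · refine ⟨S', hS', by omega, r + 1, Or.inr ?_⟩
    rwa [← crossingChange_rotate, ← crossingChange_reverse, ← List.rotate_rotate, hr,
      List.rotate_cons_succ, List.rotate_zero, List.reverse_append, List.reverse_singleton,
      List.singleton_append]

/-- For every Gauss code `D` with `n ≥ 1` chords there exists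
a set `S` of chords of `D` with `|S| ≤ (n - 1)/2` such that the crossing change
at `S` turns `D` into a descending code; consequently `u(D) ≤ (n - 1)/2`. -/
theorem small_crossing_change_descending (D : GWord) (hD : IsGaussCode D)
    (n : ℕ) (hn : (chordSet D).ncard = n) (hn1 : 1 ≤ n) :
    (∃ S : Finset ℕ, ↑S ⊆ chordSet D ∧ ((S.card : ℝ) ≤ ((n : ℝ) - 1) / 2) ∧
       IsDescending (crossingChange S D)) ∧
    (unknottingNumWord D : ℝ) ≤ ((n : ℝ) - 1) / 2 := by
  have hne : D ≠ [] := by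
    rintro rfl
    simp [chordSet, ← hn] at hn1
  obtain ⟨S, hSD, hcard, hdesc⟩ := hD.exists_crossingChange_isDescending hne
  have hS : (S.card : ℝ) ≤ ((n : ℝ) - 1) / 2 := by
    have : (2 * S.card + 1 : ℝ) ≤ n := by exact_mod_cast hn ▸ hcard
    linarith
  have hu : unknottingNumWord D ≤ S.card :=
    Nat.sInf_le ⟨S, hSD, rfl,
      (isGaussCode_crossingChange hD S).weldedEquiv_nil_of_isDescending hdesc⟩
  exact ⟨⟨S, hSD, hS, hdesc⟩, (Nat.cast_le.mpr hu).trans hS⟩
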